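/- arXiv:2510.02714 — 3 statements merged into one kernel-verified Lean document; each statement's English description precedes it below -/
import Mathlib

section
/- Let S and A be finite nonempty sets, Q : S × A → ℝ, and for each s ∈ S set Δ(s) = max_{a∈A} Q(s,a) - min_{a∈A} Q(s,a). Let b : S → ℝ be a probability vector (b(s) ≥ 0 for all s and ∑_{s∈S} b(s) = 1), and let a* ∈ A be an action maximizing the belief-averaged value, i.e., ∑_{s∈S} b(s)·Q(s,a*) ≥ ∑_{s∈S} b(s)·Q(s,a) for all a ∈ A. Then ∑_{s∈S} h(b(s))·Δ(s) ≥ ∑_{s∈S} b(s)·(max_{a∈A} Q(s,a) - Q(s,a*)), where h is the binary entropy function. -/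
/-!
Let `s₀` be a most likely state and `a₀` an action optimal at `s₀`. Optimality of `a*` for the
averaged value bounds its expected loss by that of `a₀`, whose loss vanishes at `s₀`. Every other
state has `b s ≤ b s₀` and `b s + b s₀ ≤ 1`, hence `b s ≤ 1/2`, where `b s ≤ h (b s)`; and a
per-state loss never exceeds the value gap `Δ s`.
-/

open Finset

/-- Binary entropy function with base-2 logarithm.
    `Real.logb 2 0 = 0`, so the convention `0 · log₂ 0 = 0` holds. -/
noncomputable def binEnt (p : ℝ) : ℝ :=
  -(p * Real.logb 2 p) - (1 - p) * Real.logb 2 (1 - p)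

lemma binEnt_nonneg {p : ℝ} (h0 : 0 ≤ p) (h1 : p ≤ 1) : 0 ≤ binEnt p := by
  have h0' : p * Real.logb 2 p ≤ 0 :=
    mul_nonpos_of_nonneg_of_nonpos h0 (Real.logb_nonpos one_lt_two h0 h1)
  have h1' : (1 - p) * Real.logb 2 (1 - p) ≤ 0 :=
    mul_nonpos_of_nonneg_of_nonpos (by linarith)
      (Real.logb_nonpos one_lt_two (by linarith) (by linarith))
  unfold binEnt
  linarith

lemma le_binEnt {p : ℝ} (h0 : 0 ≤ p) (h2 : p ≤ 1 / 2) : p ≤ binEnt p := by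
  have h1' : (1 - p) * Real.logb 2 (1 - p) ≤ 0 :=
    mul_nonpos_of_nonneg_of_nonpos (by linarith)
      (Real.logb_nonpos one_lt_two (by linarith) (by linarith))
  have h0' : p * Real.logb 2 p ≤ -p := by
    rcases h0.eq_or_lt with rfl | hp
    · simp
    · have hlog : Real.logb 2 p ≤ -1 := by
        simpa [one_div, Real.logb_inv, Real.logb_self_eq_one one_lt_two] using
          Real.logb_le_logb_of_le one_lt_two hp h2
      nlinarith
  unfold binEnt
  linarith

lemma mul_le_binEnt_mul {p x d : ℝ} (hp0 : 0 ≤ p) (hp : p ≤ 1 / 2) (hx : x ≤ d) (hd : 0 ≤ d) :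
    p * x ≤ binEnt p * d :=
  (mul_le_mul_of_nonneg_left hx hp0).trans (mul_le_mul_of_nonneg_right (le_binEnt hp0 hp) hd)

lemma le_half_of_le_of_ne {ι : Type*} [Fintype ι] {b : ι → ℝ} (hb0 : ∀ i, 0 ≤ b i)
    (hb1 : ∑ i, b i = 1) {i j : ι} (hij : i ≠ j) (hle : b i ≤ b j) : b i ≤ 1 / 2 := by
  classical
  have : b i + b j ≤ 1 := by
    rw [← sum_pair hij, ← hb1]
    exact sum_le_sum_of_subset_of_nonneg (subset_univ _) fun k _ _ => hb0 k
  linarith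

lemma sum_mul_sub_le_of_sum_mul_le {ι : Type*} (s : Finset ι) {w M f g : ι → ℝ}
    (h : ∑ i ∈ s, w i * g i ≤ ∑ i ∈ s, w i * f i) :
    ∑ i ∈ s, w i * (M i - f i) ≤ ∑ i ∈ s, w i * (M i - g i) := by
  simp only [mul_sub, sum_sub_distrib]
  linarith

theorem weighted_entropy_value_loss_bound
    {S A : Type*} [Fintype S] [Fintype A] [Nonempty S] [Nonempty A]
    (Q : S × A → ℝ)
    (Δ : S → ℝ)
    (hΔ : ∀ s : S, Δ s = (univ.sup' univ_nonempty fun a => Q (s, a)) -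
                        (univ.inf' univ_nonempty fun a => Q (s, a)))
    (b : S → ℝ) (hb0 : ∀ s, 0 ≤ b s) (hb1 : ∑ s, b s = 1)
    (astar : A)
    (hopt : ∀ a : A, ∑ s, b s * Q (s, a) ≤ ∑ s, b s * Q (s, astar)) :
    ∑ s, b s * ((univ.sup' univ_nonempty fun a => Q (s, a)) - Q (s, astar))
      ≤ ∑ s, binEnt (b s) * Δ s := by
  obtain ⟨s₀, -, hs₀⟩ := exists_max_image univ b univ_nonempty
  obtain ⟨a₀, -, ha₀⟩ := exists_mem_eq_sup' univ_nonempty fun a => Q (s₀, a)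
  have hgap : ∀ s a, (univ.sup' univ_nonempty fun a => Q (s, a)) - Q (s, a) ≤ Δ s :=
    fun s a => hΔ s ▸ sub_le_sub_left (inf'_le (fun a => Q (s, a)) (mem_univ a)) _
  have hΔ0 : ∀ s, 0 ≤ Δ s := fun s =>
    (sub_nonneg.2 (le_sup' (fun a => Q (s, a)) (mem_univ _))).trans (hgap s (Classical.arbitrary A))
  refine (sum_mul_sub_le_of_sum_mul_le univ (hopt a₀)).trans (sum_le_sum fun s _ => ?_)
  rcases eq_or_ne s s₀ with rfl | hs
  · rw [← ha₀, sub_self, mul_zero]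
    exact mul_nonneg (binEnt_nonneg (hb0 s) (hb1 ▸ single_le_sum (fun i _ => hb0 i) (mem_univ s)))
      (hΔ0 s)
  · exact mul_le_binEnt_mul (hb0 s) (le_half_of_le_of_ne hb0 hb1 hs (hs₀ s (mem_univ s)))
      (hgap s a₀) (hΔ0 s)
end

section
/- Let S, A, and Ω be finite nonempty sets, Q : S × A → ℝ, and for each s ∈ S set Δ(s) = max_{a∈A} Q(s,a) - min_{a∈A} Q(s,a). Let p : S × Ω → ℝ be a joint probability distribution (p(s,ω) ≥ 0 and ∑_{s,ω} p(s,ω) = 1), with marginal p(ω) = ∑_{s∈S} p(s,ω) and, whenever p(ω) > 0, posterior p(s|ω) = p(s,ω)/p(ω). Define the conditional binary entropy of the indicator of state s given the observation as H(1_s | Ω) = ∑_{ω : p(ω)>0} p(ω)·h(p(s|ω)), where h is the binary entropy function. Let a : Ω → A be an action-selection rule such that for every ω with p(ω) > 0, ∑_{s∈S} p(s|ω)·Q(s,a(ω)) ≥ ∑_{s∈S} p(s|ω)·Q(s,a') for all a' ∈ A. Then ∑_{s∈S} H(1_s | Ω)·Δ(s) ≥ ∑_{ω∈Ω} ∑_{s∈S}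 p(s,ω)·(max_{a'∈A} Q(s,a') - Q(s,a(ω))). -/
/-! Fix an observation: the posterior `q` is a probability vector on states and `a ω` is optimal
for it. Comparing `a ω` with an action optimal at a state `s₀` bounds the loss at `s₀` by the
`q`-weighted gaps of the other states, so the expected loss is at most `2 ∑_{s ≠ s₀} q s Δ s`.
Taking for `s₀` the state of posterior mass above `1/2`, if there is one, this is at most
`∑ s, 2 min (q s) (1 - q s) Δ s`, and `2 min q (1 - q) ≤ h q` by concavity of `h`.
Weighting by `pΩ ω` and summing over observations gives the bound. -/

open Finset

theorem binEnt_eq_binEntropy_div_log_two (q : ℝ) : binEnt q = Real.binEntropy q / Real.log 2 := by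
  simp only [binEnt, Real.binEntropy, Real.logb, Real.log_inv]
  ring

theorem binEnt_one_sub (q : ℝ) : binEnt (1 - q) = binEnt q := by
  simp only [binEnt_eq_binEntropy_div_log_two, Real.binEntropy_one_sub]

/-- On `[0, 1/2]` the concave function `binEnt` lies above its chord from `(0, 0)` to `(1/2, 1)`. -/
theorem two_mul_le_binEnt {q : ℝ} (h0 : 0 ≤ q) (h : q ≤ 2⁻¹) : 2 * q ≤ binEnt q := by
  have hchord := Real.strictConcave_binEntropy.concaveOn.2
    (show (0 : ℝ) ∈ Set.Icc 0 1 by norm_num) (show (2⁻¹ : ℝ) ∈ Set.Icc 0 1 by norm_num)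
    (show 0 ≤ 1 - 2 * q by linarith) (show 0 ≤ 2 * q by linarith) (sub_add_cancel 1 (2 * q))
  have hq : (1 - 2 * q) * 0 + 2 * q * 2⁻¹ = q := by ring
  simp only [smul_eq_mul, hq, Real.binEntropy_two_inv, Real.binEntropy_zero] at hchord
  rw [binEnt_eq_binEntropy_div_log_two, le_div_iff₀ (Real.log_pos one_lt_two)]
  linarith

theorem two_mul_min_le_binEnt {q : ℝ} (h0 : 0 ≤ q) (h1 : q ≤ 1) :
    2 * min q (1 - q) ≤ binEnt q := by
  rcases le_total q 2⁻¹ with h | h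
  · rw [min_eq_left (by linarith)]
    exact two_mul_le_binEnt h0 h
  · rw [min_eq_right (by linarith), ← binEnt_one_sub]
    exact two_mul_le_binEnt (by linarith) (by linarith)

section ValueLoss

variable {S A : Type*} [Fintype A] [Nonempty A]

noncomputable def valueLoss (Q : S × A → ℝ) (s : S) (b : A) : ℝ :=
  (univ.sup' univ_nonempty fun a => Q (s, a)) - Q (s, b)

variable {Q : S × A → ℝ} {Δ : S → ℝ}

theorem valueLoss_le (hΔ : ∀ s a a', Q (s, a) - Q (s, a') ≤ Δ s) (s : S) (b : A) :
    valueLoss Q s b ≤ Δ s := by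
  obtain ⟨a, -, ha⟩ := exists_mem_eq_sup' univ_nonempty fun a => Q (s, a)
  rw [valueLoss, ha]
  exact hΔ s a b

variable [Fintype S]

/-- Comparing `b` with an action optimal at `s₀` bounds the loss at `s₀` by the weighted gaps of
the other states. -/
theorem sum_mul_valueLoss_le_two_mul_sum_erase [DecidableEq S]
    (hΔ : ∀ s a a', Q (s, a) - Q (s, a') ≤ Δ s)
    {w : S → ℝ} (hw : ∀ s, 0 ≤ w s) {b : A}
    (hopt : ∀ a', ∑ s, w s * Q (s, a') ≤ ∑ s, w s * Q (s, b)) (s₀ : S) :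
    ∑ s, w s * valueLoss Q s b ≤ 2 * ∑ s ∈ univ.erase s₀, w s * Δ s := by
  obtain ⟨a₀, -, ha₀⟩ := exists_mem_eq_sup' univ_nonempty fun a => Q (s₀, a)
  have hgain : 0 ≤ ∑ s, w s * (Q (s, b) - Q (s, a₀)) := by
    simpa only [mul_sub, sum_sub_distrib, sub_nonneg] using hopt a₀
  have hrest : ∑ s ∈ univ.erase s₀, w s * (Q (s, b) - Q (s, a₀))
      ≤ ∑ s ∈ univ.erase s₀, w s * Δ s :=
    sum_le_sum fun s _ => mul_le_mul_of_nonneg_left (hΔ s b a₀) (hw s)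
  have hloss : ∑ s ∈ univ.erase s₀, w s * valueLoss Q s b ≤ ∑ s ∈ univ.erase s₀, w s * Δ s :=
    sum_le_sum fun s _ => mul_le_mul_of_nonneg_left (valueLoss_le hΔ s b) (hw s)
  rw [← add_sum_erase _ _ (mem_univ s₀)] at hgain ⊢
  rw [valueLoss, ha₀]
  linarith

theorem sum_mul_valueLoss_le_sum_two_mul_min (hΔ : ∀ s a a', Q (s, a) - Q (s, a') ≤ Δ s)
    {q : S → ℝ} (hq0 : ∀ s, 0 ≤ q s) (hq1 : ∑ s, q s = 1) {b : A}
    (hopt : ∀ a', ∑ s, q s * Q (s, a') ≤ ∑ s, q s * Q (s, b)) :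
    ∑ s, q s * valueLoss Q s b ≤ ∑ s, 2 * min (q s) (1 - q s) * Δ s := by
  classical
  have hΔ0 : ∀ s, 0 ≤ Δ s := fun s => by simpa only [sub_self] using hΔ s b b
  by_cases hmajor : ∃ s₀, 2⁻¹ < q s₀
  · obtain ⟨s₀, hs₀⟩ := hmajor
    have hminor : ∀ s ∈ univ.erase s₀, min (q s) (1 - q s) = q s := by
      intro s hs
      have : q s + q s₀ ≤ 1 := by
        rw [← hq1, ← add_sum_erase _ _ (mem_univ s₀), add_comm]
        exact add_le_add_right (single_le_sum (fun i _ => hq0 i) hs) _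
      exact min_eq_left (by linarith)
    have hq₀ : 0 ≤ 2 * min (q s₀) (1 - q s₀) * Δ s₀ := by
      have hle : q s₀ ≤ 1 := hq1 ▸ single_le_sum (fun i _ => hq0 i) (mem_univ s₀)
      exact mul_nonneg (mul_nonneg two_pos.le (le_min (hq0 s₀) (by linarith))) (hΔ0 s₀)
    calc ∑ s, q s * valueLoss Q s b ≤ 2 * ∑ s ∈ univ.erase s₀, q s * Δ s :=
          sum_mul_valueLoss_le_two_mul_sum_erase hΔ hq0 hopt s₀
      _ = ∑ s ∈ univ.erase s₀, 2 * min (q s) (1 - q s) * Δ s := by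
          rw [mul_sum]
          exact sum_congr rfl fun s hs => by rw [hminor s hs]; ring
      _ ≤ ∑ s, 2 * min (q s) (1 - q s) * Δ s := by
          rw [← add_sum_erase _ _ (mem_univ s₀)]
          linarith
  · simp only [not_exists, not_lt] at hmajor
    refine sum_le_sum fun s _ => ?_
    rw [min_eq_left (by linarith [hmajor s])]
    linarith [mul_nonneg (hq0 s) (hΔ0 s), mul_le_mul_of_nonneg_left (valueLoss_le hΔ s b) (hq0 s)]

theorem sum_mul_valueLoss_le_sum_binEnt_mul (hΔ : ∀ s a a', Q (s, a) - Q (s, a') ≤ Δ s)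
    {q : S → ℝ} (hq0 : ∀ s, 0 ≤ q s) (hq1 : ∑ s, q s = 1) {b : A}
    (hopt : ∀ a', ∑ s, q s * Q (s, a') ≤ ∑ s, q s * Q (s, b)) :
    ∑ s, q s * valueLoss Q s b ≤ ∑ s, binEnt (q s) * Δ s := by
  have hq_le_one : ∀ s, q s ≤ 1 := fun s => hq1 ▸ single_le_sum (fun i _ => hq0 i) (mem_univ s)
  have hΔ0 : ∀ s, 0 ≤ Δ s := fun s => by simpa only [sub_self] using hΔ s b b
  refine (sum_mul_valueLoss_le_sum_two_mul_min hΔ hq0 hq1 hopt).trans (sum_le_sum fun s _ => ?_)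
  exact mul_le_mul_of_nonneg_right (two_mul_min_le_binEnt (hq0 s) (hq_le_one s)) (hΔ0 s)

end ValueLoss

theorem weighted_conditional_entropy_value_loss_bound_general
    {S A Ω : Type*} [Fintype S] [Fintype A] [Fintype Ω]
    [Nonempty A]
    (Q : S × A → ℝ)
    (Δ : S → ℝ)
    (hΔ : ∀ s : S, Δ s = (univ.sup' univ_nonempty fun a => Q (s, a)) -
                        (univ.inf' univ_nonempty fun a => Q (s, a)))
    (p : S × Ω → ℝ)
    (hp0 : ∀ s ω, 0 ≤ p (s, ω))
    -- observation marginal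
    (pΩ : Ω → ℝ) (hpΩ : ∀ ω, pΩ ω = ∑ s, p (s, ω))
    -- conditional binary entropy of the indicator of each state
    (H : S → ℝ)
    (hH : ∀ s : S, H s =
      ∑ ω ∈ univ.filter (fun ω => 0 < pΩ ω), pΩ ω * binEnt (p (s, ω) / pΩ ω))
    -- action-selection rule maximizing the posterior-averaged value
    (a : Ω → A)
    (hopt : ∀ ω : Ω, 0 < pΩ ω → ∀ a' : A,
      ∑ s, (p (s, ω) / pΩ ω) * Q (s, a') ≤ ∑ s, (p (s, ω) / pΩ ω) * Q (s, a ω)) :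
    ∑ ω, ∑ s, p (s, ω) *
        ((univ.sup' univ_nonempty fun a' => Q (s, a')) - Q (s, a ω))
      ≤ ∑ s, H s * Δ s := by
  classical
  have hgap : ∀ s b b', Q (s, b) - Q (s, b') ≤ Δ s := fun s b b' => by
    rw [hΔ s]
    exact sub_le_sub (le_sup' (fun b => Q (s, b)) (mem_univ b)) (inf'_le _ (mem_univ b'))
  have hsupport : ∀ ω, ∑ s, p (s, ω) * valueLoss Q s (a ω) ≠ 0 → 0 < pΩ ω := by
    intro ω hloss
    refine (hpΩ ω ▸ sum_nonneg fun s _ => hp0 s ω).lt_of_ne fun hzero => hloss ?_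
    have hp : ∀ s ∈ univ, p (s, ω) = 0 :=
      (sum_eq_zero_iff_of_nonneg fun s _ => hp0 s ω).1 (hzero ▸ hpΩ ω).symm
    exact sum_eq_zero fun s hs => by rw [hp s hs, zero_mul]
  have hobs : ∀ ω ∈ univ.filter (fun ω => 0 < pΩ ω), ∑ s, p (s, ω) * valueLoss Q s (a ω)
      ≤ ∑ s, pΩ ω * binEnt (p (s, ω) / pΩ ω) * Δ s := by
    intro ω hω
    have hpω : 0 < pΩ ω := (mem_filter.1 hω).2
    have hpost := sum_mul_valueLoss_le_sum_binEnt_mul hgap (fun s => div_nonneg (hp0 s ω) hpω.le)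
      (by rw [← sum_div, ← hpΩ, div_self hpω.ne']) (hopt ω hpω)
    simpa only [mul_sum, ← mul_assoc, mul_div_cancel₀ _ hpω.ne'] using
      mul_le_mul_of_nonneg_left hpost hpω.le
  calc _ = ∑ ω ∈ univ.filter (fun ω => 0 < pΩ ω), ∑ s, p (s, ω) * valueLoss Q s (a ω) :=
        (sum_filter_of_ne fun ω _ => hsupport ω).symm
    _ ≤ _ := sum_le_sum hobs
    _ = ∑ s, H s * Δ s := by simp only [hH, sum_mul]; exact sum_comm

theorem weighted_conditional_entropy_value_loss_bound
    {S A Ω : Type*} [Fintype S] [Fintype A] [Fintype Ω]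
    [Nonempty S] [Nonempty A] [Nonempty Ω]
    (Q : S × A → ℝ)
    (Δ : S → ℝ)
    (hΔ : ∀ s : S, Δ s = (univ.sup' univ_nonempty fun a => Q (s, a)) -
                        (univ.inf' univ_nonempty fun a => Q (s, a)))
    (p : S × Ω → ℝ)
    (hp0 : ∀ s ω, 0 ≤ p (s, ω))
    (hp1 : ∑ s, ∑ ω, p (s, ω) = 1)
    -- observation marginal
    (pΩ : Ω → ℝ) (hpΩ : ∀ ω, pΩ ω = ∑ s, p (s, ω))
    -- conditional binary entropy of the indicator of each state
    (H : S → ℝ)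
    (hH : ∀ s : S, H s =
      ∑ ω ∈ univ.filter (fun ω => 0 < pΩ ω), pΩ ω * binEnt (p (s, ω) / pΩ ω))
    -- action-selection rule maximizing the posterior-averaged value
    (a : Ω → A)
    (hopt : ∀ ω : Ω, 0 < pΩ ω → ∀ a' : A,
      ∑ s, (p (s, ω) / pΩ ω) * Q (s, a') ≤ ∑ s, (p (s, ω) / pΩ ω) * Q (s, a ω)) :
    ∑ ω, ∑ s, p (s, ω) *
        ((univ.sup' univ_nonempty fun a' => Q (s, a')) - Q (s, a ω))
      ≤ ∑ s, H s * Δ s :=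
  weighted_conditional_entropy_value_loss_bound_general Q Δ hΔ p hp0 pΩ hpΩ H hH a hopt
end

section
/- Let S and A be finite nonempty sets, Q : S × A → ℝ, and for each s ∈ S set Δ(s) = max_{a∈A} Q(s,a) - min_{a∈A} Q(s,a). Let b : S → ℝ be a probability vector, let q ∈ S, and let a ∈ A be an action maximizing the belief-averaged value, i.e., ∑_{s∈S} b(s)·Q(s,a) ≥ ∑_{s∈S} b(s)·Q(s,a') for all a' ∈ A. Then ∑_{s∈S, s≠q} b(s)·Δ(s) ≥ b(q)·(max_{a'∈A} Q(q,a') - Q(q,a)). -/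
/-! Let `a'` attain `max Q(q, ·)`. Optimality of `a` against `a'`, with the `q`-term split off,
says that the loss `b q * (Q(q, a') - Q(q, a))` at `q` is paid back by the gains
`b s * (Q(s, a) - Q(s, a'))` at the other states, and each of those gains is at most
`b s * Δ s`. -/

open Finset

theorem Finset.sub_le_sum_sdiff_singleton_sub_of_sum_le {ι R : Type*} [Fintype ι] [DecidableEq ι]
    [AddCommGroup R] [PartialOrder R] [IsOrderedAddMonoid R] {f g : ι → R}
    (h : ∑ i, f i ≤ ∑ i, g i) (j : ι) :
    f j - g j ≤ ∑ i ∈ univ \ {j}, (g i - f i) := by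
  rw [sum_eq_add_sum_sdiff_singleton_of_mem (mem_univ j) f,
    sum_eq_add_sum_sdiff_singleton_of_mem (mem_univ j) g] at h
  rwa [sum_sub_distrib, sub_le_sub_iff, add_comm (∑ i ∈ univ \ {j}, g i)]

theorem Finset.sub_le_sup'_sub_inf' {ι α : Type*} [AddCommGroup α] [LinearOrder α]
    [IsOrderedAddMonoid α] {s : Finset ι} (hs : s.Nonempty) (f : ι → α) {x y : ι}
    (hx : x ∈ s) (hy : y ∈ s) :
    f x - f y ≤ s.sup' hs f - s.inf' hs f :=
  sub_le_sub (le_sup' f hx) (inf'_le f hy)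

theorem value_loss_domination_general
    {S A : Type*} [Fintype S] [Fintype A] [Nonempty A] [DecidableEq S]
    (Q : S × A → ℝ)
    (Δ : S → ℝ)
    (hΔ : ∀ s : S, Δ s = (univ.sup' univ_nonempty fun a => Q (s, a)) -
                        (univ.inf' univ_nonempty fun a => Q (s, a)))
    (b : S → ℝ) (hb0 : ∀ s, 0 ≤ b s)
    (q : S)
    (a : A)
    (hopt : ∀ a' : A, ∑ s, b s * Q (s, a') ≤ ∑ s, b s * Q (s, a)) :
    b q * ((univ.sup' univ_nonempty fun a' => Q (q, a')) - Q (q, a))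
      ≤ ∑ s ∈ univ \ {q}, b s * Δ s := by
  obtain ⟨a', -, ha'⟩ := exists_mem_eq_sup' univ_nonempty fun c => Q (q, c)
  have hloss := sub_le_sum_sdiff_singleton_sub_of_sum_le (hopt a') q
  simp only [← mul_sub] at hloss
  rw [ha']
  refine hloss.trans (sum_le_sum fun s _ => mul_le_mul_of_nonneg_left ?_ (hb0 s))
  rw [hΔ s]
  exact sub_le_sup'_sub_inf' univ_nonempty (fun c => Q (s, c)) (mem_univ a) (mem_univ a')

theorem value_loss_domination
    {S A : Type*} [Fintype S] [Fintype A] [Nonempty S] [Nonempty A] [DecidableEq S]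
    (Q : S × A → ℝ)
    (Δ : S → ℝ)
    (hΔ : ∀ s : S, Δ s = (univ.sup' univ_nonempty fun a => Q (s, a)) -
                        (univ.inf' univ_nonempty fun a => Q (s, a)))
    (b : S → ℝ) (hb0 : ∀ s, 0 ≤ b s) (hb1 : ∑ s, b s = 1)
    (q : S)
    (a : A)
    (hopt : ∀ a' : A, ∑ s, b s * Q (s, a') ≤ ∑ s, b s * Q (s, a)) :
    b q * ((univ.sup' univ_nonempty fun a' => Q (q, a')) - Q (q, a))
      ≤ ∑ s ∈ univ \ {q}, b s * Δ s :=
  value_loss_domination_general Q Δ hΔ b hb0 q a hopt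
end
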